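/- arXiv:1812.07075 — 2 statements merged into one kernel-verified Lean document; each statement's English description precedes it below -/
import Mathlib

section
/- Let C₁, …, C_e (e ≥ 1) be pairwise disjoint sets of edges of a finite simple triangle-free graph of maximum degree at most 3, with |Cᵢ| ≥ 3 for every i, and let q = Σᵢ |Cᵢ| be the total number of edges. Then Σ_{i=1}^{e} I_Ent(Cᵢ) ≥ 2q + (q/e)·log₂(q/e). -/
open scoped Classical

/-- The entropy impurity of a set `C` of edges:
`I_Ent(C) = Σ_{v ∈ V} d^C(v) · log₂(2|C| / d^C(v))`. -/
noncomputable def impurity {V : Type*} [Fintype V] (C : Finset (Sym2 V)) : ℝ :=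
  ∑ v : V, ((C.filter (fun e => v ∈ e)).card : ℝ) *
    Real.logb 2 ((2 * C.card : ℝ) / ((C.filter (fun e => v ∈ e)).card : ℝ))

/-!
Let `m = |C|` and let `d` be the degree function of the graph spanned by `C`. By the handshake
lemma `I_Ent(C) = 2m log₂ (2m) - Σ_v d(v) log₂ d(v)`, so it suffices to show
`Σ_v d(v) log d(v) ≤ m log m`. Summed over the `2m` ordered adjacent pairs `(v, u)`, the left side
is half of `Σ log (d(v) d(u))`. Triangle-freeness makes the edge sets at distinct neighbours of `v`
disjoint, so `Σ_{u ~ v} d(u) ≤ m` and `Σ d(v) d(u) ≤ 2m · m`; concavity of `log`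
(its tangent line at `m`) then bounds `Σ log (d(v) d(u))` by `2m log m`.

This gives `I_Ent(Cᵢ) ≥ 2|Cᵢ| + |Cᵢ| log₂ |Cᵢ|` for each group. Some group has at least the
average size `a = q / e`; as `x log x` is nonpositive on `[0, 1]`, increasing on `[1, ∞)` and
nonnegative at every natural number, `a log a ≤ |Cᵢ| log |Cᵢ| ≤ Σⱼ |Cⱼ| log |Cⱼ|`.
-/

open Finset Real

theorem sum_log_le_card_mul_log_of_sum_le {ι : Type*} (s : Finset ι) {x : ι → ℝ}
    (hx : ∀ i ∈ s, 0 < x i) {c : ℝ} (hsum : ∑ i ∈ s, x i ≤ #s * c) :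
    ∑ i ∈ s, log (x i) ≤ #s * log c := by
  rcases s.eq_empty_or_nonempty with rfl | hs
  · simp
  have hc : 0 < c := by
    have hsum_pos : 0 < ∑ i ∈ s, x i := sum_pos hx hs
    have hcard_pos : (0 : ℝ) < #s := by exact_mod_cast hs.card_pos
    nlinarith
  have htangent : ∀ i ∈ s, log (x i) ≤ log c + (x i / c - 1) := fun i hi => by
    have := log_le_sub_one_of_pos (div_pos (hx i hi) hc)
    rw [log_div (hx i hi).ne' hc.ne'] at this
    linarith
  calc ∑ i ∈ s, log (x i) ≤ ∑ i ∈ s, (log c + (x i / c - 1)) := sum_le_sum htangent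
    _ = #s * log c + ((∑ i ∈ s, x i) / c - #s) := by
      rw [sum_add_distrib, sum_sub_distrib, ← sum_div]; simp
    _ ≤ #s * log c := by
      have : (∑ i ∈ s, x i) / c ≤ #s := by rwa [div_le_iff₀ hc]
      linarith

theorem logb_natCast_nonneg {b : ℝ} (hb : 1 < b) (n : ℕ) : 0 ≤ logb b n :=
  div_nonneg (log_natCast_nonneg n) (log_nonneg hb.le)

theorem mul_logb_le_natCast_mul_logb {b a : ℝ} (hb : 1 < b) {n : ℕ} (ha : 0 ≤ a)
    (han : a ≤ n) : a * logb b a ≤ n * logb b n := by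
  rcases le_total a 1 with ha1 | ha1
  · nlinarith [logb_nonpos hb ha ha1, logb_natCast_nonneg hb n]
  · have hlog : logb b a ≤ logb b n := logb_le_logb_of_le hb (by linarith) han
    nlinarith [logb_nonneg hb ha1]

theorem mean_mul_logb_mean_le_sum {ι : Type*} (s : Finset ι) (f : ι → ℕ) {b : ℝ}
    (hb : 1 < b) :
    (∑ i ∈ s, (f i : ℝ)) / #s * logb b ((∑ i ∈ s, (f i : ℝ)) / #s)
      ≤ ∑ i ∈ s, (f i : ℝ) * logb b (f i) := by
  rcases s.eq_empty_or_nonempty with rfl | hs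
  · simp
  set a := (∑ i ∈ s, (f i : ℝ)) / #s
  obtain ⟨i, hi, hai⟩ : ∃ i ∈ s, a ≤ f i := by
    refine exists_le_of_sum_le hs ?_
    simp [a, mul_div_cancel₀ _ (show (#s : ℝ) ≠ 0 by exact_mod_cast hs.card_pos.ne')]
  calc a * logb b a ≤ f i * logb b (f i) :=
        mul_logb_le_natCast_mul_logb hb (by positivity) hai
    _ ≤ ∑ i ∈ s, (f i : ℝ) * logb b (f i) :=
        single_le_sum (f := fun i => (f i : ℝ) * logb b (f i))
          (fun j _ => mul_nonneg (Nat.cast_nonneg _) (logb_natCast_nonneg hb _)) hi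

namespace SimpleGraph

variable {V : Type*} [Fintype V] (G : SimpleGraph V) [DecidableRel G.Adj]

theorem sum_sum_neighborFinset_apply_right {M : Type*} [AddCommMonoid M] (f : V → M) :
    ∑ v, ∑ u ∈ G.neighborFinset v, f u = ∑ v, G.degree v • f v := by
  rw [sum_comm' (t' := univ) (s' := fun u => G.neighborFinset u) (by simp [G.adj_comm])]
  simp [card_neighborFinset_eq_degree]

variable {G}

theorem sum_degree_neighborFinset_le_card_edgeFinset (h : G.CliqueFree 3) (v : V) :
    ∑ u ∈ G.neighborFinset v, G.degree u ≤ #G.edgeFinset := by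
  have hdisj : (G.neighborFinset v : Set V).PairwiseDisjoint (fun u => G.incidenceFinset u) := by
    intro u hu w hw huw
    refine Finset.disjoint_left.2 fun e heu hew => ?_
    rw [mem_incidenceFinset] at heu hew
    have huw' : G.Adj u w := by
      rw [← mem_edgeSet, ← (Sym2.mem_and_mem_iff huw).1 ⟨heu.2, hew.2⟩]
      exact heu.1
    simp only [coe_neighborFinset, mem_neighborSet] at hu hw
    exact h {v, u, w} (is3Clique_triple_iff.2 ⟨hu, hw, huw'⟩)
  calc ∑ u ∈ G.neighborFinset v, G.degree u
      = #((G.neighborFinset v).biUnion fun u => G.incidenceFinset u) := by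
        simp [card_biUnion hdisj, card_incidenceFinset_eq_degree]
    _ ≤ #G.edgeFinset := card_le_card (biUnion_subset.2 fun u _ => G.incidenceFinset_subset u)

theorem sum_degree_mul_log_degree_le (h : G.CliqueFree 3) :
    ∑ v, (G.degree v : ℝ) * log (G.degree v) ≤ #G.edgeFinset * log #G.edgeFinset := by
  set m : ℝ := (#G.edgeFinset : ℝ)
  set d : V → ℝ := fun v => G.degree v
  set s := univ.sigma fun v => G.neighborFinset v
  have hdeg : ∑ v, d v = 2 * m := by
    simp only [d, m]
    exact_mod_cast G.sum_degrees_eq_twice_card_edges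
  have hcard : (#s : ℝ) = 2 * m := by
    simp [s, card_neighborFinset_eq_degree, ← hdeg, d]
  have hpos : ∀ p ∈ s, 0 < d p.1 ∧ 0 < d p.2 := by
    simp only [s, mem_sigma, mem_univ, true_and, mem_neighborFinset, d, Nat.cast_pos]
    exact fun p hp => ⟨(G.degree_pos_iff_exists_adj _).2 ⟨_, hp⟩,
      (G.degree_pos_iff_exists_adj _).2 ⟨_, hp.symm⟩⟩
  have hprod : ∑ p ∈ s, d p.1 * d p.2 ≤ #s * m := by
    calc ∑ p ∈ s, d p.1 * d p.2 = ∑ v, d v * ∑ u ∈ G.neighborFinset v, d u := by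
          simp [s, sum_sigma, mul_sum]
      _ ≤ ∑ v, d v * m := by
          gcongr with v
          simp only [d, m]
          exact_mod_cast sum_degree_neighborFinset_le_card_edgeFinset h v
      _ = #s * m := by rw [← sum_mul, hdeg, hcard]
  have hlog : ∑ p ∈ s, log (d p.1 * d p.2) = 2 * ∑ v, d v * log (d v) := by
    calc ∑ p ∈ s, log (d p.1 * d p.2) = ∑ p ∈ s, (log (d p.1) + log (d p.2)) :=
          sum_congr rfl fun p hp => log_mul (hpos p hp).1.ne' (hpos p hp).2.ne'
      _ = 2 * ∑ v, d v * log (d v) := by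
          simp only [s, sum_sigma, sum_add_distrib, sum_const, card_neighborFinset_eq_degree,
            G.sum_sum_neighborFinset_apply_right fun u => log (d u), nsmul_eq_mul]
          ring
  have := sum_log_le_card_mul_log_of_sum_le s
    (fun p hp => mul_pos (hpos p hp).1 (hpos p hp).2) hprod
  rw [hlog, hcard] at this
  linarith

theorem impurity_edgeFinset :
    impurity G.edgeFinset = 2 * #G.edgeFinset * logb 2 (2 * #G.edgeFinset)
      - ∑ v, (G.degree v : ℝ) * logb 2 (G.degree v) := by
  have hdeg : ∑ v, (G.degree v : ℝ) = 2 * #G.edgeFinset := by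
    exact_mod_cast G.sum_degrees_eq_twice_card_edges
  have hterm : ∀ v, (G.degree v : ℝ) * logb 2 (2 * #G.edgeFinset / G.degree v)
      = G.degree v * logb 2 (2 * #G.edgeFinset) - G.degree v * logb 2 (G.degree v) := by
    intro v
    rcases eq_or_ne (G.degree v : ℝ) 0 with h0 | h0
    · simp [h0]
    · have hd : 0 < G.degree v := Nat.pos_of_ne_zero (by exact_mod_cast h0)
      have hm : (0 : ℝ) < #G.edgeFinset := by
        exact_mod_cast hd.trans_le (G.degree_le_card_edgeFinset v)
      rw [logb_div (by positivity) h0, mul_sub]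
  simp only [impurity, ← incidenceFinset_eq_filter, card_incidenceFinset_eq_degree, hterm,
    sum_sub_distrib, ← sum_mul, hdeg]

theorem add_mul_logb_le_impurity_edgeFinset (h : G.CliqueFree 3) :
    2 * #G.edgeFinset + #G.edgeFinset * logb 2 #G.edgeFinset ≤ impurity G.edgeFinset := by
  have hsum : ∑ v, (G.degree v : ℝ) * logb 2 (G.degree v)
      ≤ #G.edgeFinset * logb 2 #G.edgeFinset := by
    simp only [logb, mul_div_assoc', ← sum_div]
    gcongr
    exact sum_degree_mul_log_degree_le h
  rw [impurity_edgeFinset]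
  rcases eq_or_ne (#G.edgeFinset : ℝ) 0 with h0 | h0
  · simpa [h0] using hsum
  · rw [logb_mul two_ne_zero h0, logb_self_eq_one one_lt_two]
    linarith

end SimpleGraph

open SimpleGraph

theorem add_mul_logb_le_impurity {V : Type*} [Fintype V] {G : SimpleGraph V} (h : G.CliqueFree 3)
    {C : Finset (Sym2 V)} (hC : ↑C ⊆ G.edgeSet) :
    2 * #C + #C * logb 2 #C ≤ impurity C := by
  have hCG : fromEdgeSet ↑C ≤ G := (fromEdgeSet_le G).2 (Set.sdiff_subset.trans hC)
  have hedgeSet : (fromEdgeSet (C : Set (Sym2 V))).edgeSet = C := by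
    rw [edgeSet_fromEdgeSet, sdiff_eq_left.2 ?_]
    exact Set.disjoint_left.2 fun e he => G.not_isDiag_of_mem_edgeSet (hC he)
  convert add_mul_logb_le_impurity_edgeFinset (h.anti hCG) <;>
    exact coe_injective (by rw [coe_edgeFinset, hedgeSet])

theorem impurity_e_group_bound_general {V : Type*} [Fintype V] (G : SimpleGraph V)
    (htf : G.CliqueFree 3)
    (e : ℕ) (C : Fin e → Finset (Sym2 V))
    (hsub : ∀ i, (↑(C i) : Set (Sym2 V)) ⊆ G.edgeSet)
    (q : ℕ) (hq : q = ∑ i, (C i).card) :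
    2 * (q : ℝ) + ((q : ℝ) / e) * Real.logb 2 ((q : ℝ) / e)
      ≤ ∑ i, impurity (C i) := by
  have hq' : (q : ℝ) = ∑ i, (#(C i) : ℝ) := by rw [hq]; push_cast; rfl
  calc _ ≤ ∑ i, (2 * (#(C i) : ℝ) + #(C i) * logb 2 #(C i)) := by
        have hmean := mean_mul_logb_mean_le_sum univ (fun i => #(C i)) one_lt_two
        rw [card_univ, Fintype.card_fin, ← hq'] at hmean
        rw [sum_add_distrib, ← mul_sum, ← hq']
        linarith
    _ ≤ ∑ i, impurity (C i) := sum_le_sum fun i _ => add_mul_logb_le_impurity htf (hsub i)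

/-- if `C₁, …, C_e` (`e ≥ 1`) are pairwise disjoint sets of edges of a
finite simple triangle-free graph of maximum degree at most 3, each with `|Cᵢ| ≥ 3`,
and `q = Σᵢ |Cᵢ|`, then `Σᵢ I_Ent(Cᵢ) ≥ 2q + (q/e)·log₂(q/e)`. -/
theorem impurity_e_group_bound {V : Type*} [Fintype V] (G : SimpleGraph V)
    [DecidableRel G.Adj]
    (htf : G.CliqueFree 3) (hdeg : ∀ v : V, G.degree v ≤ 3)
    (e : ℕ) (he : 1 ≤ e) (C : Fin e → Finset (Sym2 V))
    (hsub : ∀ i, (↑(C i) : Set (Sym2 V)) ⊆ G.edgeSet)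
    (hdisj : ∀ i j, i ≠ j → Disjoint (C i) (C j))
    (hsize : ∀ i, 3 ≤ (C i).card)
    (q : ℕ) (hq : q = ∑ i, (C i).card) :
    2 * (q : ℝ) + ((q : ℝ) / e) * Real.logb 2 ((q : ℝ) / e)
      ≤ ∑ i, impurity (C i) :=
  impurity_e_group_bound_general G htf e C hsub q hq
end

section
/- Let G = (V, E) be a finite simple triangle-free graph of maximum degree at most 3, let k be a positive integer with |E| ≤ 3k, and let ε > 0 be such that every vertex cover of G has size at least k(1+ε). Set κ = 6k + 3(|E| − 2k)·log₂ 3 and η = (1.25 − 0.75·log₂ 3)·ε / (6 + 3·log₂ 3). Then every partition of E into k clusters C₁, …, C_k satisfies Σ_{i=1}^{k} I_Ent(Cᵢ) ≥ (1+η)·κ. -/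
open scoped Classical

/-- A vertex cover: a set of vertices touching every edge. -/
def IsVCover {V : Type*} (G : SimpleGraph V) (S : Finset V) : Prop :=
  ∀ e ∈ G.edgeSet, ∃ v ∈ S, v ∈ e

/-!
If every vertex of a cluster `C` with `m` edges has `C`-degree at most 3 and `aⱼ` of them have
degree `j`, then `I_Ent(C) = 2m (1 + log₂ m) - 2 a₂ - 3 a₃ log₂ 3`. The vertices of degree at least
two, together with one endpoint of each of the `s` isolated edges of `C`, cover `C`, and
`I_Ent(C) ≥ 6 + 3 (m - 2) log₂ 3 + c (a₂ + a₃ + s - 1)` with `c = 1.25 - 0.75 log₂ 3`. For `m ≥ 7`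
this follows from `2 a₂ + 3 a₃ + 2 s ≤ 2m` alone; for `m ≤ 6` it is a finite check, which also uses
that any `t ≤ 3` vertices have degree sum less than `m + t` (two vertices share at most one edge,
and three share at most two because `G` is triangle-free). The covers of the `k` clusters together
cover `G`, so summing over the clusters gives `Σ I_Ent(Cᵢ) ≥ κ + c k ε ≥ (1 + η) κ`, the last step
because `|E| ≤ 3k` gives `κ ≤ k (6 + 3 log₂ 3)`.
-/

open Finset Real

theorem Finset.sum_comp_eq_sum_range_card_nsmul {ι M : Type*} [Fintype ι] [AddCommMonoid M]
    {f : ι → ℕ} {n : ℕ} (hf : ∀ i, f i < n) (g : ℕ → M) :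
    ∑ i, g (f i) = ∑ j ∈ range n, #{i | f i = j} • g j := by
  rw [← sum_fiberwise_of_maps_to' (t := range n) fun i _ => mem_range.mpr (hf i)]
  simp only [sum_const]

theorem Finset.exists_subset_sum_eq {ι : Type*} [Fintype ι] {f : ι → ℕ} {p q i j : ℕ} (hpq : p ≠ q)
    (hi : i ≤ #{x | f x = p}) (hj : j ≤ #{x | f x = q}) :
    ∃ T : Finset ι, #T = i + j ∧ ∑ x ∈ T, f x = p * i + q * j := by
  obtain ⟨A, hA, rfl⟩ := exists_subset_card_eq hi
  obtain ⟨B, hB, rfl⟩ := exists_subset_card_eq hj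
  have hAB : Disjoint A B :=
    (disjoint_filter.mpr fun _ _ hp hq => hpq (hp.symm.trans hq)).mono hA hB
  refine ⟨A ∪ B, card_union_of_disjoint hAB, ?_⟩
  rw [sum_union hAB, sum_congr rfl fun x hx => (mem_filter.mp (hA hx)).2,
    sum_congr rfl fun x hx => (mem_filter.mp (hB hx)).2, sum_const, sum_const, smul_eq_mul,
    smul_eq_mul, mul_comm p, mul_comm q]

theorem SimpleGraph.card_edgeFinset_eq_sum_card {ι V : Type*} [Fintype ι] [Fintype V]
    {G : SimpleGraph V} [DecidableRel G.Adj] {C : ι → Finset (Sym2 V)}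
    (hdisj : ∀ i j, i ≠ j → Disjoint (C i) (C j)) (hcover : ∀ e, e ∈ G.edgeSet ↔ ∃ i, e ∈ C i) :
    #G.edgeFinset = ∑ i, #(C i) := by
  rw [← card_biUnion fun i _ j _ h => hdisj i j h]
  congr 1
  ext e
  simp [hcover]

theorem one_add_div_mul_le_add_mul {t D κ k : ℝ} (ht : 0 ≤ t) (hD : 0 < D) (hκ : κ ≤ k * D) :
    (1 + t / D) * κ ≤ κ + t * k := by
  calc (1 + t / D) * κ = κ + t / D * κ := by ring
    _ ≤ κ + t / D * (k * D) := by gcongr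
    _ = κ + t * k := by field_simp

theorem div_lt_logb_of_pow_lt {b x : ℝ} (hb : 1 < b) {p q : ℕ} (hq : 0 < q)
    (h : b ^ p < x ^ q) : (p / q : ℝ) < logb b x := by
  have := logb_lt_logb hb (by positivity) h
  rw [logb_pow, logb_pow, logb_self_eq_one hb, mul_one] at this
  rwa [div_lt_iff₀ (by positivity), mul_comm]

theorem logb_lt_div_of_pow_lt {b x : ℝ} (hb : 1 < b) (hx : 0 < x) {p q : ℕ} (hq : 0 < q)
    (h : x ^ q < b ^ p) : logb b x < p / q := by
  have := logb_lt_logb hb (by positivity) h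
  rw [logb_pow, logb_pow, logb_self_eq_one hb, mul_one] at this
  rwa [lt_div_iff₀ (by positivity), mul_comm]

theorem logb_two_three_gt : (84 / 53 : ℝ) < logb 2 3 := by
  exact_mod_cast div_lt_logb_of_pow_lt (p := 84) (q := 53) one_lt_two (by norm_num)
    (by norm_num)

theorem logb_two_three_lt : logb 2 3 < 65 / 41 := by
  exact_mod_cast logb_lt_div_of_pow_lt (p := 65) (q := 41) one_lt_two three_pos (by norm_num)
    (by norm_num)

theorem logb_two_five_gt : (58 / 25 : ℝ) < logb 2 5 := by
  exact_mod_cast div_lt_logb_of_pow_lt (p := 58) (q := 25) one_lt_two (by norm_num)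
    (by norm_num)

theorem logb_two_seven_gt : (14 / 5 : ℝ) < logb 2 7 := by
  exact_mod_cast div_lt_logb_of_pow_lt (p := 14) (q := 5) one_lt_two (by norm_num)
    (by norm_num)

theorem cluster_inequality_of_seven_le {m a₂ a₃ s : ℕ} (hm : 7 ≤ m)
    (hsum : 2 * a₂ + 3 * a₃ + 2 * s ≤ 2 * m) :
    6 + 3 * ((m : ℝ) - 2) * logb 2 3 + (1.25 - 0.75 * logb 2 3) * (a₂ + a₃ + s - 1)
      ≤ 2 * m * (1 + logb 2 m) - 2 * a₂ - 3 * logb 2 3 * a₃ := by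
  have hL₁ := logb_two_three_gt
  have hL₂ := logb_two_three_lt
  have hm' : (7 : ℝ) ≤ m := by exact_mod_cast hm
  have hsum' : 2 * (a₂ : ℝ) + 3 * a₃ + 2 * s ≤ 2 * m := by exact_mod_cast hsum
  have ha₃ : (0 : ℝ) ≤ a₃ := a₃.cast_nonneg
  have hs : (0 : ℝ) ≤ s := s.cast_nonneg
  -- `13 / 212` bounds `1.25 - 0.75 * logb 2 3` from above
  have hlog : m * (5 * logb 2 3 - 2 + 13 / 212) + 6 - 6 * logb 2 3 ≤ 2 * m * logb 2 m := by
    rcases hm.eq_or_lt with rfl | h8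
    · push_cast
      linarith [logb_two_seven_gt]
    · have : (3 : ℝ) ≤ logb 2 m := by
        rw [show (3 : ℝ) = logb 2 (2 ^ 3) by rw [logb_pow, logb_self_eq_one one_lt_two]; norm_num]
        exact logb_le_logb_of_le one_lt_two (by positivity) (by exact_mod_cast h8)
      nlinarith
  nlinarith

set_option maxHeartbeats 1000000 in
theorem cluster_inequality_of_le_six {m a₂ a₃ s : ℕ} (hm : m ≤ 6)
    (hsum : 2 * a₂ + 3 * a₃ + 2 * s ≤ 2 * m)
    (hiso₂ : 0 < a₂ → s + 2 ≤ m) (hiso₃ : 0 < a₃ → s + 3 ≤ m)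
    (hfew : ∀ i j, i + j ≤ 3 → i ≤ a₂ → j ≤ a₃ → 2 * i + 3 * j < m + i + j) :
    6 + 3 * ((m : ℝ) - 2) * logb 2 3 + (1.25 - 0.75 * logb 2 3) * (a₂ + a₃ + s - 1)
      ≤ 2 * m * (1 + logb 2 m) - 2 * a₂ - 3 * logb 2 3 * a₃ := by
  have h₀₀ := hfew 0 0; have h₂₀ := hfew 2 0; have h₁₁ := hfew 1 1; have h₀₂ := hfew 0 2
  have h₃₀ := hfew 3 0; have h₂₁ := hfew 2 1; have h₁₂ := hfew 1 2; have h₀₃ := hfew 0 3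
  have hm₀ : 0 < m := by omega
  have ha₂ : a₂ ≤ 6 := by omega
  have ha₃ : a₃ ≤ 4 := by omega
  have hs : s ≤ 6 := by omega
  have hL₁ := logb_two_three_gt
  have hL₂ := logb_two_three_lt
  have hlog₁ : logb 2 1 = 0 := logb_one
  have hlog₂ : logb 2 2 = 1 := logb_self_eq_one one_lt_two
  have hlog₄ : logb 2 4 = 2 := by
    rw [show (4 : ℝ) = 2 ^ 2 by norm_num, logb_pow, hlog₂]; norm_num
  have hlog₅ := logb_two_five_gt
  have hlog₆ : logb 2 6 = 1 + logb 2 3 := by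
    rw [show (6 : ℝ) = 2 * 3 by norm_num, logb_mul two_ne_zero three_ne_zero, hlog₂]
  interval_cases m <;> interval_cases a₂ <;> interval_cases a₃ <;> interval_cases s <;>
    first | omega | (push_cast; linarith)

theorem cluster_inequality {m a₂ a₃ s : ℕ} (hsum : 2 * a₂ + 3 * a₃ + 2 * s ≤ 2 * m)
    (hiso₂ : 0 < a₂ → s + 2 ≤ m) (hiso₃ : 0 < a₃ → s + 3 ≤ m)
    (hfew : ∀ i j, i + j ≤ 3 → i ≤ a₂ → j ≤ a₃ → 2 * i + 3 * j < m + i + j) :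
    6 + 3 * ((m : ℝ) - 2) * logb 2 3 + (1.25 - 0.75 * logb 2 3) * (a₂ + a₃ + s - 1)
      ≤ 2 * m * (1 + logb 2 m) - 2 * a₂ - 3 * logb 2 3 * a₃ := by
  rcases le_or_gt m 6 with hm | hm
  · exact cluster_inequality_of_le_six hm hsum hiso₂ hiso₃ hfew
  · exact cluster_inequality_of_seven_le hm hsum

section Cluster

variable {V : Type*} (C : Finset (Sym2 V))

noncomputable def clusterDegree (v : V) : ℕ := #{e ∈ C | v ∈ e}

noncomputable def isolatedEdges [Fintype V] : Finset (Sym2 V) :=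
  {e ∈ C | ∀ v ∈ e, clusterDegree C v = 1}

noncomputable def clusterCover [Fintype V] : Finset V :=
  ({v | 2 ≤ clusterDegree C v} : Finset V) ∪ (isolatedEdges C).image fun e => e.out.1

variable {C}

theorem mem_isolatedEdges [Fintype V] {e : Sym2 V} :
    e ∈ isolatedEdges C ↔ e ∈ C ∧ ∀ v ∈ e, clusterDegree C v = 1 :=
  mem_filter

theorem clusterDegree_le_card (v : V) : clusterDegree C v ≤ #C := card_filter_le _ _

theorem clusterDegree_le_degree {G : SimpleGraph V} (hC : (C : Set (Sym2 V)) ⊆ G.edgeSet) (v : V)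
    [Fintype (G.neighborSet v)] : clusterDegree C v ≤ G.degree v := by
  rw [← G.card_incidenceFinset_eq_degree]
  exact card_le_card fun e he => (G.mem_incidenceFinset v e).mpr
    ⟨hC (mem_filter.mp he).1, (mem_filter.mp he).2⟩

theorem sum_clusterDegree [Fintype V] (hC : ∀ e ∈ C, ¬ e.IsDiag) :
    ∑ v, clusterDegree C v = 2 * #C :=
  calc ∑ v, clusterDegree C v = ∑ e ∈ C, #{v | v ∈ e} :=
        sum_card_bipartiteAbove_eq_sum_card_bipartiteBelow _
    _ = ∑ e ∈ C, 2 := sum_congr rfl fun e he => by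
        rw [← Sym2.card_toFinset_of_not_isDiag e (hC e he)]
        congr 1
        ext v
        simp
    _ = 2 * #C := by rw [sum_const, smul_eq_mul, mul_comm]

theorem card_filter_mem_inter_le_one {u w : V} (h : u ≠ w) :
    #({e ∈ C | u ∈ e} ∩ {e ∈ C | w ∈ e}) ≤ 1 :=
  card_le_one.mpr fun e he f hf => by
    simp only [mem_inter, mem_filter] at he hf
    exact Sym2.eq_of_ne_mem h he.1.2 he.2.2 hf.1.2 hf.2.2

theorem adj_of_filter_mem_inter_nonempty {G : SimpleGraph V} (hC : (C : Set (Sym2 V)) ⊆ G.edgeSet)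
    {u w : V} (h : u ≠ w) (hne : ({e ∈ C | u ∈ e} ∩ {e ∈ C | w ∈ e}).Nonempty) : G.Adj u w := by
  obtain ⟨e, he⟩ := hne
  simp only [mem_inter, mem_filter] at he
  rw [← G.mem_edgeSet, ← (Sym2.mem_and_mem_iff h).mp ⟨he.1.2, he.2.2⟩]
  exact hC he.1.1

theorem clusterDegree_add_le {u w : V} (h : u ≠ w) :
    clusterDegree C u + clusterDegree C w ≤ #C + 1 := by
  have h₁ := card_union_add_card_inter {e ∈ C | u ∈ e} {e ∈ C | w ∈ e}
  have h₂ := card_le_card (union_subset (filter_subset (u ∈ ·) C) (filter_subset (w ∈ ·) C))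
  have h₃ := card_filter_mem_inter_le_one (C := C) h
  unfold clusterDegree
  omega

theorem clusterDegree_add_add_le {G : SimpleGraph V} (hG : G.CliqueFree 3)
    (hC : (C : Set (Sym2 V)) ⊆ G.edgeSet) {u v w : V} (huv : u ≠ v) (huw : u ≠ w) (hvw : v ≠ w) :
    clusterDegree C u + clusterDegree C v + clusterDegree C w ≤ #C + 2 := by
  have hAB := card_filter_mem_inter_le_one (C := C) huv
  have hAD := card_filter_mem_inter_le_one (C := C) huw
  have hBD := card_filter_mem_inter_le_one (C := C) hvw
  have hpairs : #({e ∈ C | u ∈ e} ∩ {e ∈ C | v ∈ e}) + #({e ∈ C | u ∈ e} ∩ {e ∈ C | w ∈ e})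
      + #({e ∈ C | v ∈ e} ∩ {e ∈ C | w ∈ e}) ≤ 2 := by
    by_contra! hlt
    refine hG {u, v, w} (SimpleGraph.is3Clique_triple_iff.mpr ⟨?_, ?_, ?_⟩) <;>
      refine adj_of_filter_mem_inter_nonempty hC ‹_› (card_pos.mp ?_) <;> omega
  set A := {e ∈ C | u ∈ e}
  set B := {e ∈ C | v ∈ e}
  set D := {e ∈ C | w ∈ e}
  have h₁ := card_union_add_card_inter A B
  have h₂ := card_union_add_card_inter (A ∪ B) D
  have h₃ : #((A ∪ B) ∩ D) ≤ #(A ∩ D) + #(B ∩ D) := by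
    rw [union_inter_distrib_right]; exact card_union_le _ _
  have h₄ : #(A ∪ B ∪ D) ≤ #C := card_le_card
    (union_subset (union_subset (filter_subset _ C) (filter_subset _ C)) (filter_subset _ C))
  change #A + #B + #D ≤ #C + 2
  omega

theorem sum_clusterDegree_lt {G : SimpleGraph V} (hG : G.CliqueFree 3)
    (hC : (C : Set (Sym2 V)) ⊆ G.edgeSet) (hne : C.Nonempty) {T : Finset V} (hT : #T ≤ 3) :
    ∑ v ∈ T, clusterDegree C v < #C + #T := by
  rcases (by omega : #T = 0 ∨ #T = 1 ∨ #T = 2 ∨ #T = 3) with h | h | h | h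
  · simpa [card_eq_zero.mp h] using hne.card_pos
  · obtain ⟨a, rfl⟩ := card_eq_one.mp h
    simpa using Nat.lt_succ_of_le (clusterDegree_le_card a)
  · obtain ⟨a, b, hab, rfl⟩ := card_eq_two.mp h
    rw [sum_pair hab, h]
    have := clusterDegree_add_le (C := C) hab
    omega
  · obtain ⟨a, b, c, hab, hac, hbc, rfl⟩ := card_eq_three.mp h
    rw [sum_insert (by simp [hab, hac]), sum_pair hbc, h]
    have := clusterDegree_add_add_le hG hC hab hac hbc
    omega

theorem two_mul_add_three_mul_lt [Fintype V] {G : SimpleGraph V} (hG : G.CliqueFree 3)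
    (hC : (C : Set (Sym2 V)) ⊆ G.edgeSet) (hne : C.Nonempty) {i j : ℕ} (hij : i + j ≤ 3)
    (hi : i ≤ #{v | clusterDegree C v = 2}) (hj : j ≤ #{v | clusterDegree C v = 3}) :
    2 * i + 3 * j < #C + i + j := by
  obtain ⟨T, hT, hsumT⟩ := exists_subset_sum_eq (by norm_num) hi hj
  rw [← hsumT, add_assoc, ← hT]
  exact sum_clusterDegree_lt hG hC hne (hT ▸ hij)

theorem clusterDegree_add_card_isolatedEdges_le [Fintype V] {v : V} (hv : 2 ≤ clusterDegree C v) :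
    clusterDegree C v + #(isolatedEdges C) ≤ #C := by
  have hdisj : Disjoint {e ∈ C | v ∈ e} (isolatedEdges C) := disjoint_left.mpr fun e he hiso => by
    have := (mem_isolatedEdges.mp hiso).2 v (mem_filter.mp he).2
    omega
  rw [clusterDegree, ← card_union_of_disjoint hdisj]
  exact card_le_card (union_subset (filter_subset _ _) (filter_subset _ _))

theorem two_mul_card_isolatedEdges_le [Fintype V] (hC : ∀ e ∈ C, ¬ e.IsDiag) :
    2 * #(isolatedEdges C) ≤ #{v | clusterDegree C v = 1} := by
  rw [← sum_clusterDegree (C := isolatedEdges C) fun e he => hC e (filter_subset _ _ he),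
    card_filter]
  refine sum_le_sum fun v _ => ?_
  split_ifs with h
  · rw [← h]
    exact card_le_card (filter_subset_filter _ (filter_subset _ _))
  · exact (card_eq_zero.mpr (filter_eq_empty_iff.mpr fun e he hv =>
      h ((mem_isolatedEdges.mp he).2 v hv))).le

theorem exists_mem_clusterCover [Fintype V] {e : Sym2 V} (he : e ∈ C) :
    ∃ v ∈ clusterCover C, v ∈ e := by
  by_cases h : ∃ v ∈ e, 2 ≤ clusterDegree C v
  · obtain ⟨v, hv, h₂⟩ := h
    exact ⟨v, mem_union_left _ (mem_filter.mpr ⟨mem_univ v, h₂⟩), hv⟩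
  · push Not at h
    have hiso : e ∈ isolatedEdges C := mem_isolatedEdges.mpr ⟨he, fun v hv =>
      le_antisymm (Nat.le_of_lt_succ (h v hv)) (card_pos.mpr ⟨e, mem_filter.mpr ⟨he, hv⟩⟩)⟩
    exact ⟨e.out.1, mem_union_right _ (mem_image_of_mem _ hiso), Sym2.out_fst_mem e⟩

theorem card_clusterCover_le [Fintype V] :
    #(clusterCover C) ≤ #{v | 2 ≤ clusterDegree C v} + #(isolatedEdges C) :=
  (card_union_le _ _).trans (Nat.add_le_add_left card_image_le _)

theorem card_add_two_mul_card_add_three_mul_card_eq [Fintype V]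
    (hdeg : ∀ v, clusterDegree C v ≤ 3) (hC : ∀ e ∈ C, ¬ e.IsDiag) :
    #{v | clusterDegree C v = 1} + 2 * #{v | clusterDegree C v = 2}
      + 3 * #{v | clusterDegree C v = 3} = 2 * #C := by
  have := sum_comp_eq_sum_range_card_nsmul (n := 4) (fun v => Nat.lt_succ_of_le (hdeg v)) id
  simp only [id_eq, smul_eq_mul, sum_range_succ, range_one, sum_singleton, mul_zero, mul_one,
    zero_add] at this
  rw [← sum_clusterDegree hC, this]
  ring

theorem card_two_le_clusterDegree [Fintype V] (hdeg : ∀ v, clusterDegree C v ≤ 3) :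
    #{v | 2 ≤ clusterDegree C v} = #{v | clusterDegree C v = 2} + #{v | clusterDegree C v = 3} := by
  have := sum_comp_eq_sum_range_card_nsmul (n := 4) (fun v => Nat.lt_succ_of_le (hdeg v))
    fun j => if 2 ≤ j then 1 else 0
  simpa [sum_range_succ] using this

theorem sum_clusterDegree_mul_logb [Fintype V] (hdeg : ∀ v, clusterDegree C v ≤ 3) :
    ∑ v, (clusterDegree C v : ℝ) * logb 2 (clusterDegree C v)
      = 2 * #{v | clusterDegree C v = 2} + 3 * logb 2 3 * #{v | clusterDegree C v = 3} := by
  have := sum_comp_eq_sum_range_card_nsmul (n := 4) (fun v => Nat.lt_succ_of_le (hdeg v))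
    fun j => (j : ℝ) * logb 2 j
  simp only [nsmul_eq_mul, sum_range_succ, range_one, sum_singleton, Nat.cast_zero, logb_zero,
    mul_zero, Nat.cast_one, logb_one, add_zero, Nat.cast_ofNat, logb_self_eq_one one_lt_two,
    mul_one, zero_add] at this
  rw [this]
  ring

theorem impurity_eq_sub [Fintype V] (hC : ∀ e ∈ C, ¬ e.IsDiag) :
    impurity C = 2 * #C * logb 2 (2 * #C)
      - ∑ v, (clusterDegree C v : ℝ) * logb 2 (clusterDegree C v) := by
  have hsum : ∑ v, (clusterDegree C v : ℝ) = 2 * #C := by exact_mod_cast sum_clusterDegree hC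
  calc impurity C
      = ∑ v, ((clusterDegree C v : ℝ) * logb 2 (2 * #C)
          - clusterDegree C v * logb 2 (clusterDegree C v)) := sum_congr rfl fun v _ => ?_
    _ = _ := by rw [sum_sub_distrib, ← sum_mul, hsum]
  change (clusterDegree C v : ℝ) * logb 2 (2 * #C / clusterDegree C v) = _
  rcases eq_or_ne (clusterDegree C v) 0 with h | h
  · simp [h]
  · have hm : (#C : ℝ) ≠ 0 := by
      have := clusterDegree_le_card (C := C) v
      exact_mod_cast (by omega : #C ≠ 0)
    rw [logb_div (by positivity) (by exact_mod_cast h), mul_sub]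

theorem impurity_eq_of_clusterDegree_le_three [Fintype V] (hdeg : ∀ v, clusterDegree C v ≤ 3)
    (hC : ∀ e ∈ C, ¬ e.IsDiag) (hne : C.Nonempty) :
    impurity C = 2 * #C * (1 + logb 2 #C) - 2 * #{v | clusterDegree C v = 2}
      - 3 * logb 2 3 * #{v | clusterDegree C v = 3} := by
  rw [impurity_eq_sub hC, sum_clusterDegree_mul_logb hdeg,
    logb_mul two_ne_zero (by exact_mod_cast hne.card_pos.ne'), logb_self_eq_one one_lt_two]
  ring

theorem le_impurity_of_cliqueFree [Fintype V] {G : SimpleGraph V} (hG : G.CliqueFree 3)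
    (hC : (C : Set (Sym2 V)) ⊆ G.edgeSet) (hdeg : ∀ v, clusterDegree C v ≤ 3) :
    6 + 3 * ((#C : ℝ) - 2) * logb 2 3 + (1.25 - 0.75 * logb 2 3) * (#(clusterCover C) - 1)
      ≤ impurity C := by
  have hL₁ := logb_two_three_gt
  have hL₂ := logb_two_three_lt
  have hnd : ∀ e ∈ C, ¬ e.IsDiag := fun e he => G.not_isDiag_of_mem_edgeSet (hC he)
  rcases C.eq_empty_or_nonempty with rfl | hne
  · have himp : impurity (∅ : Finset (Sym2 V)) = 0 := by simp [impurity]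
    have hcover : clusterCover (∅ : Finset (Sym2 V)) = ∅ := by
      simp [clusterCover, isolatedEdges, clusterDegree]
    simp only [himp, hcover, card_empty, Nat.cast_zero]
    linarith
  set a₂ := #{v | clusterDegree C v = 2}
  set a₃ := #{v | clusterDegree C v = 3}
  set s := #(isolatedEdges C)
  have hsum : 2 * a₂ + 3 * a₃ + 2 * s ≤ 2 * #C := by
    have := card_add_two_mul_card_add_three_mul_card_eq hdeg hnd
    have := two_mul_card_isolatedEdges_le hnd
    omega
  have hiso : ∀ j, 2 ≤ j → 0 < #{v | clusterDegree C v = j} → s + j ≤ #C := by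
    intro j hj hpos
    obtain ⟨v, hv⟩ := card_pos.mp hpos
    have hv : clusterDegree C v = j := (mem_filter.mp hv).2
    have := clusterDegree_add_card_isolatedEdges_le (hv ▸ hj)
    omega
  have hcover : (#(clusterCover C) : ℝ) ≤ a₂ + a₃ + s := by
    have := card_clusterCover_le (C := C)
    rw [card_two_le_clusterDegree hdeg] at this
    exact_mod_cast this
  have key := cluster_inequality hsum (hiso 2 le_rfl) (hiso 3 (by norm_num))
    fun i j => two_mul_add_three_mul_lt hG hC hne
  rw [impurity_eq_of_clusterDegree_le_three hdeg hnd hne]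
  have hc : 0 ≤ 1.25 - 0.75 * logb 2 3 := by linarith
  linarith [mul_le_mul_of_nonneg_left (sub_le_sub_right hcover 1) hc]

theorem isVCover_biUnion_clusterCover {ι : Type*} [Fintype ι] [Fintype V] {G : SimpleGraph V}
    {C : ι → Finset (Sym2 V)} (hcover : ∀ e ∈ G.edgeSet, ∃ i, e ∈ C i) :
    IsVCover G (univ.biUnion fun i => clusterCover (C i)) := fun e he => by
  obtain ⟨i, hi⟩ := hcover e he
  obtain ⟨v, hv, hve⟩ := exists_mem_clusterCover hi
  exact ⟨v, mem_biUnion.mpr ⟨i, mem_univ i, hv⟩, hve⟩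

end Cluster

theorem clustering_impurity_gap_general {V : Type*} [Fintype V] (G : SimpleGraph V)
    [DecidableRel G.Adj]
    (htf : G.CliqueFree 3) (hdeg : ∀ v : V, G.degree v ≤ 3)
    (k : ℕ) (hE : G.edgeFinset.card ≤ 3 * k)
    (ε : ℝ) (hε : 0 < ε)
    (hVC : ∀ S : Finset V, IsVCover G S → (k : ℝ) * (1 + ε) ≤ S.card)
    (C : Fin k → Finset (Sym2 V))
    (hdisj : ∀ i j, i ≠ j → Disjoint (C i) (C j))
    (hcover : ∀ e : Sym2 V, e ∈ G.edgeSet ↔ ∃ i, e ∈ C i) :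
    (1 + (1.25 - 0.75 * Real.logb 2 3) * ε / (6 + 3 * Real.logb 2 3)) *
        (6 * (k : ℝ) + 3 * ((G.edgeFinset.card : ℝ) - 2 * k) * Real.logb 2 3)
      ≤ ∑ i, impurity (C i) := by
  have hL₁ := logb_two_three_gt
  have hL₂ := logb_two_three_lt
  have hc : 0 ≤ 1.25 - 0.75 * logb 2 3 := by linarith
  have hCG : ∀ i, (C i : Set (Sym2 V)) ⊆ G.edgeSet := fun i e he => (hcover e).2 ⟨i, he⟩
  have hclusters := fun i => le_impurity_of_cliqueFree htf (hCG i)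
    fun v => (clusterDegree_le_degree (hCG i) v).trans (hdeg v)
  have hcov : (k : ℝ) * (1 + ε) ≤ ∑ i, (#(clusterCover (C i)) : ℝ) :=
    (hVC _ (isVCover_biUnion_clusterCover fun e he => (hcover e).1 he)).trans
      (by exact_mod_cast card_biUnion_le)
  have hκ : 6 * (k : ℝ) + 3 * ((#G.edgeFinset : ℝ) - 2 * k) * logb 2 3
      ≤ k * (6 + 3 * logb 2 3) := by
    have : (#G.edgeFinset : ℝ) ≤ 3 * k := by exact_mod_cast hE
    nlinarith
  calc _ ≤ 6 * (k : ℝ) + 3 * ((#G.edgeFinset : ℝ) - 2 * k) * logb 2 3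
        + (1.25 - 0.75 * logb 2 3) * ε * k :=
        one_add_div_mul_le_add_mul (mul_nonneg hc hε.le) (by positivity) hκ
    _ ≤ ∑ i, (6 + 3 * ((#(C i) : ℝ) - 2) * logb 2 3
        + (1.25 - 0.75 * logb 2 3) * (#(clusterCover (C i)) - 1)) := by
        simp only [sum_add_distrib, sum_sub_distrib, ← mul_sum, ← sum_mul, sum_const, card_univ,
          Fintype.card_fin, nsmul_eq_mul, G.card_edgeFinset_eq_sum_card hdisj hcover, Nat.cast_sum]
        nlinarith [mul_le_mul_of_nonneg_left hcov hc]
    _ ≤ ∑ i, impurity (C i) := sum_le_sum fun i _ => hclusters i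

/-- let `G = (V, E)` be a finite simple triangle-free graph of maximum
degree at most 3 with `|E| ≤ 3k`, and suppose every vertex cover of `G` has size at
least `k(1+ε)`. With `κ = 6k + 3(|E| − 2k)·log₂ 3` and
`η = (1.25 − 0.75·log₂ 3)·ε/(6 + 3·log₂ 3)`, every partition of `E` into `k` clusters
has total entropy impurity at least `(1+η)·κ`. -/
theorem clustering_impurity_gap {V : Type*} [Fintype V] (G : SimpleGraph V)
    [DecidableRel G.Adj]
    (htf : G.CliqueFree 3) (hdeg : ∀ v : V, G.degree v ≤ 3)
    (k : ℕ) (hk : 0 < k) (hE : G.edgeFinset.card ≤ 3 * k)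
    (ε : ℝ) (hε : 0 < ε)
    (hVC : ∀ S : Finset V, IsVCover G S → (k : ℝ) * (1 + ε) ≤ S.card)
    (C : Fin k → Finset (Sym2 V))
    (hdisj : ∀ i j, i ≠ j → Disjoint (C i) (C j))
    (hcover : ∀ e : Sym2 V, e ∈ G.edgeSet ↔ ∃ i, e ∈ C i) :
    (1 + (1.25 - 0.75 * Real.logb 2 3) * ε / (6 + 3 * Real.logb 2 3)) *
        (6 * (k : ℝ) + 3 * ((G.edgeFinset.card : ℝ) - 2 * k) * Real.logb 2 3)
      ≤ ∑ i, impurity (C i) :=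
  clustering_impurity_gap_general G htf hdeg k hE ε hε hVC C hdisj hcover
end
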